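/- arXiv:2510.05352 — 2 statements merged into one kernel-verified Lean document; each statement's English description precedes it below -/
import Mathlib

section
/- For d ≥ 3 define p_c(d) = ((d·e^{d+1}/(d+1)^d)·Γ(d,d+1))^{−1} with Γ(d,d+1) = (d−1)!·e^{−(d+1)}·Σ_{i=0}^{d−1}(d+1)^i/i!. Then 0 < p_c(d) < 1. -/
open Finset Real

/-- Incomplete gamma function at natural arguments. -/
noncomputable def incGamma (m : ℕ) (x : ℝ) : ℝ :=
  (Nat.factorial (m - 1) : ℝ) * Real.exp (-x) *
    ∑ i ∈ Finset.range m, x ^ i / (Nat.factorial i : ℝ)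

/-- Critical spreading probability on the Cayley tree of coordination number `d+1`. -/
noncomputable def pCrit (d : ℕ) : ℝ :=
  ((d : ℝ) * Real.exp ((d : ℝ) + 1) / ((d : ℝ) + 1) ^ d * incGamma d ((d : ℝ) + 1))⁻¹

theorem pCrit_nontrivial (d : ℕ) (hd : 3 ≤ d) : 0 < pCrit d ∧ pCrit d < 1 := by
  obtain ⟨k, rfl⟩ : ∃ k, d = k + 3 := ⟨d - 3, by omega⟩
  set x : ℝ := ((k + 3 : ℕ) : ℝ) + 1 with hxdef
  have hx4 : x = (k : ℝ) + 4 := by push_cast [hxdef]; ring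
  have hxpos : (0 : ℝ) < x := by rw [hx4]; positivity
  have hxp : (0 : ℝ) < x ^ (k + 3) := pow_pos hxpos _
  set S : ℝ := ∑ i ∈ Finset.range (k + 3), x ^ i / (Nat.factorial i : ℝ) with hSdef
  have hT : (0 : ℝ) ≤ ∑ i ∈ Finset.range (k + 1), x ^ i / (Nat.factorial i : ℝ) := by
    apply Finset.sum_nonneg
    intro i _
    exact div_nonneg (pow_nonneg hxpos.le _) (by positivity)
  have hSsplit : S = (∑ i ∈ Finset.range (k + 1), x ^ i / (Nat.factorial i : ℝ)) +
      x ^ (k + 1) / (Nat.factorial (k + 1) : ℝ) + x ^ (k + 2) / (Nat.factorial (k + 2) : ℝ) := by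
    rw [hSdef, Finset.sum_range_succ, Finset.sum_range_succ]
  have hf1 : ((Nat.factorial (k + 2) : ℕ) : ℝ) = ((k : ℝ) + 2) * (Nat.factorial (k + 1) : ℝ) := by
    rw [Nat.factorial_succ]; push_cast; ring
  have hf1pos : (0 : ℝ) < (Nat.factorial (k + 1) : ℝ) := by
    exact_mod_cast (Nat.factorial_pos (k + 1))
  have hkey : x ^ (k + 3) < ((k + 3 : ℕ) : ℝ) * (Nat.factorial (k + 2) : ℝ) * S := by
    rw [hSsplit]
    have hmain : x ^ (k + 3) < ((k + 3 : ℕ) : ℝ) * (Nat.factorial (k + 2) : ℝ) *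
        (x ^ (k + 1) / (Nat.factorial (k + 1) : ℝ) + x ^ (k + 2) / (Nat.factorial (k + 2) : ℝ)) := by
      have hxk : (0 : ℝ) < x ^ (k + 1) := pow_pos hxpos _
      have c1 : ((k + 3 : ℕ) : ℝ) * (Nat.factorial (k + 2) : ℝ) *
          (x ^ (k + 1) / (Nat.factorial (k + 1) : ℝ) + x ^ (k + 2) / (Nat.factorial (k + 2) : ℝ)) =
          ((k : ℝ) + 3) * ((k : ℝ) + 2) * x ^ (k + 1) + ((k : ℝ) + 3) * (x ^ (k + 1) * x) := by
        rw [hf1]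
        push_cast
        field_simp
        ring
      rw [c1, show x ^ (k + 3) = x ^ (k + 1) * x ^ 2 by ring, hx4]
      nlinarith [mul_pos (pow_pos (show (0:ℝ) < (k:ℝ) + 4 by positivity) (k+1)) (show (0:ℝ) < (k:ℝ)^2 + 4*(k:ℝ) + 2 by positivity)]
    have hnn : (0 : ℝ) ≤ ((k + 3 : ℕ) : ℝ) * (Nat.factorial (k + 2) : ℝ) *
        ∑ i ∈ Finset.range (k + 1), x ^ i / (Nat.factorial i : ℝ) := by positivity
    nlinarith [hmain, hnn]
  have hE : 1 < ((k + 3 : ℕ) : ℝ) * Real.exp x / x ^ (k + 3) *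
      ((Nat.factorial (k + 2) : ℝ) * Real.exp (-x) * S) := by
    have heq : ((k + 3 : ℕ) : ℝ) * Real.exp x / x ^ (k + 3) *
        ((Nat.factorial (k + 2) : ℝ) * Real.exp (-x) * S) =
        ((k + 3 : ℕ) : ℝ) * (Nat.factorial (k + 2) : ℝ) * S / x ^ (k + 3) := by
      rw [Real.exp_neg]
      field_simp
    rw [heq, lt_div_iff₀ hxp, one_mul]
    exact hkey
  have hsimp : pCrit (k + 3) = (((k + 3 : ℕ) : ℝ) * Real.exp x / x ^ (k + 3) *
      ((Nat.factorial (k + 2) : ℝ) * Real.exp (-x) * S))⁻¹ := by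
    simp only [pCrit, incGamma, hxdef, hSdef]
    norm_num
  rw [hsimp]
  constructor
  · exact inv_pos.mpr (lt_trans one_pos hE)
  · exact inv_lt_one_of_one_lt₀ hE
end

section
/- As d → ∞, p_c(d) := ((d·e^{d+1}/(d+1)^d)·Γ(d,d+1))^{−1} satisfies p_c(d) ~ sqrt(2/(πd)), i.e., lim_{d→∞} p_c(d)·sqrt(πd/2) = 1. -/
open Finset Real Filter

/-!
Substituting `t = (d + 1) (1 + u / √d)` in `Γ(d, d + 1) = ∫_{d+1}^∞ t^{d-1} e^{-t} dt` gives
`1 / p_c(d) = √d ∫_0^∞ (1 + u / √d)^{d-1} e^{-(d+1) u / √d} du`. The integrand is the exponential of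
`(d - 1) log (1 + u / √d) - (d + 1) u / √d`, which tends to `-u² / 2`; the estimate
`log (1 + x) ≤ x - x² / (2 (1 + x))` bounds it by `(1 - u) / 8` for `d ≥ 2`. Dominated convergence then
gives `∫_0^∞ e^{-u²/2} du = √(π / 2)` as the limit of the integral.
-/

open MeasureTheory Set Topology
open scoped Nat

namespace Real

lemma log_le_sub_inv_div_two {y : ℝ} (hy : 1 ≤ y) : log y ≤ (y - y⁻¹) / 2 := by
  have hy0 : 0 < y := one_pos.trans_le hy
  have h := self_le_sinh_iff.2 (log_nonneg hy)
  rwa [sinh_eq, exp_neg, exp_log hy0] at h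

lemma log_one_add_le_sub_sq_div {x : ℝ} (hx : 0 ≤ x) :
    log (1 + x) ≤ x - x ^ 2 / (2 * (1 + x)) := by
  have h := log_le_sub_inv_div_two (by linarith : 1 ≤ 1 + x)
  have h1x : 1 + x ≠ 0 := by positivity
  have hx' : ((1 + x) - (1 + x)⁻¹) / 2 = x - x ^ 2 / (2 * (1 + x)) := by field_simp; ring
  linarith

lemma abs_log_one_add_sub_le {x : ℝ} (hx : 0 ≤ x) (hx' : x ≤ 1 / 2) :
    |log (1 + x) - (x - x ^ 2 / 2)| ≤ 2 * x ^ 3 := by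
  have h := abs_log_sub_add_sum_range_le (x := -x) (by rw [abs_neg, abs_of_nonneg hx]; linarith) 2
  have hsum : ∑ i ∈ range 2, (-x) ^ (i + 1) / (i + 1 : ℝ) = -(x - x ^ 2 / 2) := by
    norm_num [Finset.sum_range_succ]; ring
  rw [hsum, abs_neg, abs_of_nonneg hx, sub_neg_eq_add, neg_add_eq_sub] at h
  calc |log (1 + x) - (x - x ^ 2 / 2)| ≤ x ^ 3 / (1 - x) := h
    _ ≤ 2 * x ^ 3 := by
        rw [div_le_iff₀ (by linarith)]
        nlinarith [pow_nonneg hx 3, mul_nonneg (pow_nonneg hx 3) (by linarith : 0 ≤ 1 / 2 - x)]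

end Real

lemma hasDerivAt_sum_range_pow_div_factorial (n : ℕ) (t : ℝ) :
    HasDerivAt (fun t : ℝ => ∑ i ∈ range (n + 1), t ^ i / (i ! : ℝ))
      (∑ i ∈ range n, t ^ i / (i ! : ℝ)) t := by
  induction n with
  | zero => simpa using hasDerivAt_const t (1 : ℝ)
  | succ n ih =>
    simp only [sum_range_succ _ (n + 1)]
    refine (ih.add ((hasDerivAt_pow (n + 1) t).div_const ((n + 1)! : ℝ))).congr_deriv ?_
    rw [sum_range_succ, Nat.factorial_succ, Nat.cast_mul, Nat.add_sub_cancel]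
    field_simp

lemma incGamma_succ_eq_integral (n : ℕ) {a : ℝ} (ha : 0 ≤ a) :
    incGamma (n + 1) a = ∫ t in Ioi a, t ^ n * exp (-t) := by
  set F : ℝ → ℝ := fun t => -(n ! * (exp (-t) * ∑ i ∈ range (n + 1), t ^ i / (i ! : ℝ)))
  have hF : ∀ t, HasDerivAt F (t ^ n * exp (-t)) t := fun t => by
    refine (((hasDerivAt_neg t).exp.mul (hasDerivAt_sum_range_pow_div_factorial n t)).const_mul
      (n ! : ℝ)).neg.congr_deriv ?_
    rw [sum_range_succ]
    field_simp
    ring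
  have hF_tendsto : Tendsto F atTop (𝓝 0) := by
    have h := (tendsto_finsetSum (range (n + 1)) fun i _ =>
      (tendsto_pow_mul_exp_neg_atTop_nhds_zero i).div_const (i ! : ℝ)).const_mul (n ! : ℝ) |>.neg
    simp only [zero_div, sum_const_zero, mul_zero, neg_zero] at h
    refine h.congr fun t => ?_
    simp only [F, mul_sum]
    congr 2 with i
    ring
  rw [integral_Ioi_of_hasDerivAt_of_nonneg' (fun t _ => hF t)
    (fun t ht => by have : 0 ≤ t := ha.trans (le_of_lt ht); positivity) hF_tendsto]
  simp [F, incGamma, mul_assoc]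

lemma smul_integral_comp_add_mul_Ioi {E : Type*} [NormedAddCommGroup E] [NormedSpace ℝ E]
    (f : ℝ → E) (a : ℝ) {c : ℝ} (hc : 0 < c) :
    c • ∫ s in Ioi 0, f (a + c * s) = ∫ t in Ioi a, f t := by
  have hshift := (measurePreserving_add_left volume a).setIntegral_preimage_emb
    (MeasurableEquiv.addLeft a).measurableEmbedding f (Ioi a)
  rw [preimage_const_add_Ioi, sub_self] at hshift
  rw [integral_comp_mul_left_Ioi' (fun s => f (a + s)) 0 hc, mul_zero, hshift]

/-- The integrand `t ^ (d - 1) * exp (-t)` of `Γ(d, d + 1)` after the substitution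
`t = (d + 1) (1 + u / √d)`, divided by its value at `u = 0`. -/
noncomputable def rescaledGammaIntegrand (d : ℕ) (u : ℝ) : ℝ :=
  (1 + u / √d) ^ (d - 1) * exp (-((d + 1) * (u / √d)))

lemma incGamma_eq_mul_integral_rescaledGammaIntegrand {d : ℕ} (hd : 1 ≤ d) :
    incGamma d (d + 1) =
      (d + 1) ^ d * exp (-(d + 1)) / √d * ∫ u in Ioi 0, rescaledGammaIntegrand d u := by
  obtain ⟨n, rfl⟩ : ∃ n, d = n + 1 := ⟨d - 1, by omega⟩
  set D : ℝ := ((n + 1 : ℕ) : ℝ)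
  have hs : 0 < √D := by positivity
  set c : ℝ := (D + 1) / √D with hc
  have hsubst : ∀ s, (D + 1 + c * s) ^ n * exp (-(D + 1 + c * s)) =
      (D + 1) ^ n * exp (-(D + 1)) * rescaledGammaIntegrand (n + 1) s := fun s => by
    have harg : D + 1 + c * s = (D + 1) * (1 + s / √D) := by rw [hc]; field_simp
    rw [rescaledGammaIntegrand, Nat.add_sub_cancel, harg, mul_pow,
      show -((D + 1) * (1 + s / √D)) = -(D + 1) + -((D + 1) * (s / √D)) by ring, exp_add]
    ring
  rw [incGamma_succ_eq_integral n (by positivity), ← smul_integral_comp_add_mul_Ioi _ _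
    (by positivity : 0 < c), smul_eq_mul]
  simp_rw [hsubst]
  rw [integral_const_mul, pow_succ, hc]
  field_simp

lemma pCrit_eq_inv {d : ℕ} (hd : 1 ≤ d) :
    pCrit d = (√d * ∫ u in Ioi 0, rescaledGammaIntegrand d u)⁻¹ := by
  have hs : 0 < √(d : ℝ) := by positivity
  rw [pCrit, incGamma_eq_mul_integral_rescaledGammaIntegrand hd, exp_neg]
  congr 1
  field_simp
  rw [sq_sqrt (by positivity)]

/-- `log (rescaledGammaIntegrand d u)` for `u ≥ 0`, with `d` relaxed to a real parameter `D`. -/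
noncomputable def rescaledExponent (D u : ℝ) : ℝ :=
  (D - 1) * log (1 + u / √D) - (D + 1) * (u / √D)

lemma rescaledExponent_le {D u : ℝ} (hD : 2 ≤ D) (hu : 0 ≤ u) :
    rescaledExponent D u ≤ (1 - u) / 8 := by
  have hs1 : 1 ≤ √D := one_le_sqrt.2 (by linarith)
  set x := u / √D with hx
  have hx0 : 0 ≤ x := div_nonneg hu (by positivity)
  have hxu : x ≤ u := div_le_self hu hs1
  have hux : u ^ 2 = D * x ^ 2 := by
    rw [hx, div_pow, sq_sqrt (by linarith), mul_div_cancel₀ _ (by positivity)]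
  have hlog := mul_le_mul_of_nonneg_left (log_one_add_le_sub_sq_div hx0)
    (by linarith : 0 ≤ D - 1)
  have hquad : u ^ 2 / (4 * (1 + u)) ≤ (D - 1) * (x ^ 2 / (2 * (1 + x))) := by
    rw [mul_div_assoc', div_le_div_iff₀ (by positivity) (by positivity), hux]
    nlinarith [mul_le_mul_of_nonneg_left (by nlinarith : 2 * D * (1 + x) ≤ 4 * (D - 1) * (1 + u))
      (sq_nonneg x)]
  have htail : -(u ^ 2 / (4 * (1 + u))) ≤ (1 - u) / 8 := by
    have : (1 - u) / 8 + u ^ 2 / (4 * (1 + u)) = (1 + u ^ 2) / (8 * (1 + u)) := by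
      field_simp; ring
    have : 0 ≤ (1 + u ^ 2) / (8 * (1 + u)) := by positivity
    linarith
  unfold rescaledExponent
  linarith

lemma tendsto_rescaledExponent {u : ℝ} (hu : 0 ≤ u) :
    Tendsto (fun D => rescaledExponent D u) atTop (𝓝 (-(u ^ 2 / 2))) := by
  set x : ℝ → ℝ := fun D => u / √D with hx
  have hx0 : ∀ D, 0 ≤ x D := fun D => div_nonneg hu (sqrt_nonneg D)
  have hx_tendsto : Tendsto x atTop (𝓝 0) := by
    simpa using tendsto_const_nhds.div_atTop tendsto_sqrt_atTop
  have hsq : ∀ D, 0 < D → D * x D ^ 2 = u ^ 2 := fun D hD => by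
    rw [hx, div_pow, sq_sqrt hD.le, mul_div_cancel₀ _ hD.ne']
  -- `D · O(x³) = u² · O(x)`, so the cubic Taylor remainder of `log` contributes nothing.
  have hremainder : Tendsto (fun D => D * (log (1 + x D) - (x D - x D ^ 2 / 2))) atTop (𝓝 0) := by
    refine squeeze_zero_norm' ?_ (by simpa using hx_tendsto.const_mul (2 * u ^ 2))
    filter_upwards [hx_tendsto.eventually_le_const (by norm_num : (0 : ℝ) < 1 / 2),
      eventually_gt_atTop 0] with D hxD hD
    rw [norm_mul, norm_of_nonneg hD.le, norm_eq_abs]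
    calc D * |log (1 + x D) - (x D - x D ^ 2 / 2)| ≤ D * (2 * x D ^ 3) :=
          mul_le_mul_of_nonneg_left (abs_log_one_add_sub_le (hx0 D) hxD) hD.le
      _ = 2 * u ^ 2 * x D := by rw [← hsq D hD]; ring
  have hlog : Tendsto (fun D => log (1 + x D)) atTop (𝓝 0) := by
    simpa using ((tendsto_const_nhds (x := (1 : ℝ))).add hx_tendsto).log (by norm_num)
  have hlim := ((hremainder.sub hlog).sub hx_tendsto).sub_const (u ^ 2 / 2)
  rw [sub_zero, sub_zero, zero_sub] at hlim
  refine hlim.congr' ?_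
  filter_upwards [eventually_gt_atTop 0] with D hD
  rw [rescaledExponent, ← hsq D hD]
  ring

lemma continuous_rescaledGammaIntegrand (d : ℕ) : Continuous (rescaledGammaIntegrand d) := by
  unfold rescaledGammaIntegrand
  fun_prop

lemma rescaledGammaIntegrand_eq_exp {d : ℕ} (hd : 1 ≤ d) {u : ℝ} (hu : 0 ≤ u) :
    rescaledGammaIntegrand d u = exp (rescaledExponent d u) := by
  have hy : 0 < 1 + u / √d := by positivity
  rw [rescaledGammaIntegrand, rescaledExponent, ← Nat.cast_pred hd, exp_sub, ← log_pow,
    exp_log (pow_pos hy _), exp_neg]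
  rfl

lemma rescaledGammaIntegrand_le {d : ℕ} (hd : 2 ≤ d) {u : ℝ} (hu : 0 ≤ u) :
    rescaledGammaIntegrand d u ≤ exp ((1 - u) / 8) := by
  rw [rescaledGammaIntegrand_eq_exp (by omega) hu, exp_le_exp]
  exact rescaledExponent_le (by exact_mod_cast hd) hu

lemma tendsto_rescaledGammaIntegrand {u : ℝ} (hu : 0 ≤ u) :
    Tendsto (fun d : ℕ => rescaledGammaIntegrand d u) atTop (𝓝 (exp (-(u ^ 2 / 2)))) := by
  refine ((continuous_exp.tendsto _).comp
    ((tendsto_rescaledExponent hu).comp tendsto_natCast_atTop_atTop)).congr' ?_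
  filter_upwards [eventually_ge_atTop 1] with d hd
  exact (rescaledGammaIntegrand_eq_exp hd hu).symm

lemma integral_exp_neg_sq_div_two_Ioi : ∫ u in Ioi (0 : ℝ), exp (-(u ^ 2 / 2)) = √(π / 2) := by
  have h := integral_gaussian_Ioi (1 / 2)
  rw [show π / (1 / 2) = (π / 2) * 2 ^ 2 by ring, sqrt_mul (by positivity),
    sqrt_sq zero_le_two, mul_div_cancel_right₀ _ two_ne_zero] at h
  simpa [neg_div, div_eq_inv_mul] using h

lemma tendsto_integral_rescaledGammaIntegrand :
    Tendsto (fun d : ℕ => ∫ u in Ioi (0 : ℝ), rescaledGammaIntegrand d u) atTop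
      (𝓝 (√(π / 2))) := by
  rw [← integral_exp_neg_sq_div_two_Ioi]
  have hbound : IntegrableOn (fun u : ℝ => exp ((1 - u) / 8)) (Ioi 0) := by
    have h : IntegrableOn (fun u : ℝ => exp (1 / 8) * exp (-(1 / 8) * u)) (Ioi 0) :=
      (exp_neg_integrableOn_Ioi 0 (by norm_num)).const_mul _
    refine h.congr_fun (fun u _ => ?_) measurableSet_Ioi
    simp only [← exp_add]
    ring_nf
  refine tendsto_integral_filter_of_dominated_convergence _
    (Eventually.of_forall fun d => (continuous_rescaledGammaIntegrand d).aestronglyMeasurable)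
    ?_ hbound ?_
  · filter_upwards [eventually_ge_atTop 2] with d hd
    refine (ae_restrict_iff' measurableSet_Ioi).2 (Eventually.of_forall fun u (hu : 0 < u) => ?_)
    rw [norm_of_nonneg (by unfold rescaledGammaIntegrand; positivity)]
    exact rescaledGammaIntegrand_le hd hu.le
  · exact (ae_restrict_iff' measurableSet_Ioi).2
      (Eventually.of_forall fun u (hu : 0 < u) => tendsto_rescaledGammaIntegrand hu.le)

theorem pCrit_asymptotic :
    Tendsto (fun d : ℕ => pCrit d * Real.sqrt (Real.pi * (d : ℝ) / 2)) atTop (nhds 1) := by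
  have hlim : Tendsto (fun d : ℕ => √(π / 2) / ∫ u in Ioi 0, rescaledGammaIntegrand d u) atTop
      (𝓝 1) := by
    have h := (tendsto_const_nhds (x := √(π / 2))).div tendsto_integral_rescaledGammaIntegrand
      (by positivity)
    rwa [div_self (by positivity)] at h
  refine hlim.congr' ?_
  filter_upwards [eventually_ge_atTop 1] with d hd
  have hs : 0 < √(d : ℝ) := by positivity
  rw [pCrit_eq_inv hd, show π * d / 2 = d * (π / 2) by ring, sqrt_mul (Nat.cast_nonneg d)]
  field_simp
end
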